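/- Let X be an A-bounded operator on H admitting an A-adjoint (i.e. there exists Xs with A∘Xs = X*∘A). Then w_𝔸([[0,X],[0,0]]) = w_𝔸([[0,0],[X,0]]) = (1/2)·‖X‖_A. -/

import Mathlib

/-!
For unit vectors `z = (u, v)` of `H ⊕ H`, i.e. `‖u‖_A² + ‖v‖_A² = 1`, both off-diagonal blocks give
`|⟨𝕏 z, z⟩_𝔸| = |⟨X v, u⟩_A|` (with `u` and `v` swapped for the lower block). Cauchy–Schwarz for the
semi-inner product `⟨·,·⟩_A` bounds this by `‖X‖_A ‖v‖_A ‖u‖_A ≤ ½ ‖X‖_A`, and for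
`‖y‖_A = 1` the choice `u = X y / (√2 ‖X y‖_A)`, `v = y / √2` gives exactly `½ ‖X y‖_A`.
-/

noncomputable def sInner {E : Type*} [NormedAddCommGroup E] [InnerProductSpace ℂ E]
    (A : E →L[ℂ] E) (x y : E) : ℂ := inner ℂ (A x) y

noncomputable def sNorm {E : Type*} [NormedAddCommGroup E] [InnerProductSpace ℂ E]
    (A : E →L[ℂ] E) (x : E) : ℝ := Real.sqrt (sInner A x x).re

/-- The `A`-operator seminorm. -/
noncomputable def opSNorm {E : Type*} [NormedAddCommGroup E] [InnerProductSpace ℂ E]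
    (A T : E →L[ℂ] E) : ℝ := sSup {c | ∃ x : E, sNorm A x = 1 ∧ c = sNorm A (T x)}

/-- The `A`-numerical radius. -/
noncomputable def numRad {E : Type*} [NormedAddCommGroup E] [InnerProductSpace ℂ E]
    (A T : E →L[ℂ] E) : ℝ := sSup {c | ∃ x : E, sNorm A x = 1 ∧ c = ‖sInner A (T x) x‖}

/-- `T` is `A`-bounded. -/
def ABounded {E : Type*} [NormedAddCommGroup E] [InnerProductSpace ℂ E]
    (A T : E →L[ℂ] E) : Prop := ∃ c > 0, ∀ x : E, sNorm A (T x) ≤ c * sNorm A x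

/-- The 2×2 block operator `[[T, X], [Y, S]]` on `H ⊕ H` (with the ℓ² product structure). -/
noncomputable def blk {H : Type*} [NormedAddCommGroup H] [InnerProductSpace ℂ H]
    (T X Y S : H →L[ℂ] H) : WithLp 2 (H × H) →L[ℂ] WithLp 2 (H × H) :=
  ((WithLp.prodContinuousLinearEquiv 2 ℂ H H).symm.toContinuousLinearMap.comp
    (((T.coprod X).prod (Y.coprod S)).comp
      (WithLp.prodContinuousLinearEquiv 2 ℂ H H).toContinuousLinearMap))

/-- The diagonal operator `𝔸 = diag(A, A)` on `H ⊕ H`. -/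
noncomputable def twoA {H : Type*} [NormedAddCommGroup H] [InnerProductSpace ℂ H]
    (A : H →L[ℂ] H) : WithLp 2 (H × H) →L[ℂ] WithLp 2 (H × H) := blk A 0 0 A
section

variable {E : Type*} [NormedAddCommGroup E] [InnerProductSpace ℂ E] {A : E →L[ℂ] E}

lemma sInner_smul_smul (A : E →L[ℂ] E) (c d : ℂ) (x y : E) :
    sInner A (c • x) (d • y) = starRingEnd ℂ c * d * sInner A x y := by
  simp only [sInner, map_smul, inner_smul_left, inner_smul_right]
  ring

lemma sNorm_nonneg (A : E →L[ℂ] E) (x : E) : 0 ≤ sNorm A x := Real.sqrt_nonneg _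

@[reducible] noncomputable def ContinuousLinearMap.IsPositive.preInnerProductCore
    (hA : A.IsPositive) : PreInnerProductSpace.Core ℂ E where
  inner := sInner A
  conj_inner_symm x y := by
    simp only [sInner, inner_conj_symm, hA.inner_left_eq_inner_right]
  re_inner_nonneg := hA.re_inner_nonneg_left
  add_left x y z := by simp only [sInner, map_add, inner_add_left]
  smul_left x y r := by simp only [sInner, map_smul, inner_smul_left]

lemma norm_sInner_le (hA : A.IsPositive) (x y : E) :
    ‖sInner A x y‖ ≤ sNorm A x * sNorm A y :=
  @InnerProductSpace.Core.norm_inner_le_norm ℂ E _ _ _ hA.preInnerProductCore x y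

lemma sInner_self_re_nonneg (hA : A.IsPositive) (x : E) : 0 ≤ (sInner A x x).re :=
  hA.re_inner_nonneg_left x

lemma sInner_self_eq_sNorm_sq (hA : A.IsPositive) (x : E) :
    sInner A x x = ((sNorm A x ^ 2 : ℝ) : ℂ) := by
  rw [sNorm, Real.sq_sqrt (sInner_self_re_nonneg hA x)]
  exact Complex.eq_re_of_ofReal_le (hA.inner_nonneg_left x)

lemma sNorm_ofReal_smul (hA : A.IsPositive) {t : ℝ} (ht : 0 ≤ t) (x : E) :
    sNorm A ((t : ℂ) • x) = t * sNorm A x := by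
  rw [sNorm, sInner_smul_smul, Complex.conj_ofReal, sInner_self_eq_sNorm_sq hA,
    ← Complex.ofReal_mul, ← Complex.ofReal_mul, Complex.ofReal_re, ← sq, ← mul_pow,
    Real.sqrt_sq (mul_nonneg ht (sNorm_nonneg A x))]

@[simp]
lemma sInner_zero_left (A : E →L[ℂ] E) (y : E) : sInner A 0 y = 0 := by
  simp [sInner]

lemma opSNorm_nonneg (A T : E →L[ℂ] E) : 0 ≤ opSNorm A T :=
  Real.sSup_nonneg fun _ ⟨x, _, hc⟩ => hc ▸ sNorm_nonneg A (T x)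

lemma sNorm_apply_le_opSNorm_mul (hA : A.IsPositive) {T : E →L[ℂ] E} (hT : ABounded A T)
    (x : E) : sNorm A (T x) ≤ opSNorm A T * sNorm A x := by
  obtain ⟨c, -, hc⟩ := hT
  rcases (sNorm_nonneg A x).eq_or_lt with hx | hx
  · simpa [← hx] using hc x
  have hbdd : BddAbove {c | ∃ x : E, sNorm A x = 1 ∧ c = sNorm A (T x)} :=
    ⟨c, fun _ ⟨y, hy, hd⟩ => hd ▸ (hc y).trans_eq (by rw [hy, mul_one])⟩
  have hunit : sNorm A ((((sNorm A x)⁻¹ : ℝ) : ℂ) • x) = 1 := by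
    rw [sNorm_ofReal_smul hA (inv_nonneg.2 hx.le), inv_mul_cancel₀ hx.ne']
  have hle := le_csSup hbdd ⟨_, hunit, rfl⟩
  rw [map_smul, sNorm_ofReal_smul hA (inv_nonneg.2 hx.le), inv_mul_le_iff₀ hx] at hle
  rwa [mul_comm] at hle

def offDiagValues (A X : E →L[ℂ] E) : Set ℝ :=
  {c | ∃ u v : E, sNorm A u ^ 2 + sNorm A v ^ 2 = 1 ∧ c = ‖sInner A (X v) u‖}

lemma le_of_mem_offDiagValues (hA : A.IsPositive) {X : E →L[ℂ] E} (hX : ABounded A X) {c : ℝ}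
    (hc : c ∈ offDiagValues A X) : c ≤ 1 / 2 * opSNorm A X := by
  obtain ⟨u, v, huv, rfl⟩ := hc
  have hvu : sNorm A v * sNorm A u ≤ 1 / 2 := by nlinarith [sq_nonneg (sNorm A u - sNorm A v)]
  calc ‖sInner A (X v) u‖ ≤ sNorm A (X v) * sNorm A u := norm_sInner_le hA _ _
    _ ≤ opSNorm A X * sNorm A v * sNorm A u := by
      gcongr
      exacts [sNorm_nonneg A u, sNorm_apply_le_opSNorm_mul hA hX v]
    _ ≤ 1 / 2 * opSNorm A X := by
      nlinarith [mul_le_mul_of_nonneg_left hvu (opSNorm_nonneg A X)]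

lemma half_sNorm_apply_mem_offDiagValues (hA : A.IsPositive) {X : E →L[ℂ] E} {y : E}
    (hy : sNorm A y = 1) (hXy : 0 < sNorm A (X y)) :
    sNorm A (X y) / 2 ∈ offDiagValues A X := by
  set t := sNorm A (X y)
  set a := √(1 / 2 : ℝ)
  have ha : 0 ≤ a := Real.sqrt_nonneg _
  have ha2 : a ^ 2 = 1 / 2 := Real.sq_sqrt (by norm_num)
  refine ⟨((a / t : ℝ) : ℂ) • X y, (a : ℂ) • y, ?_, ?_⟩
  · rw [sNorm_ofReal_smul hA (by positivity), sNorm_ofReal_smul hA ha, hy,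
      div_mul_cancel₀ _ hXy.ne']
    linarith
  · rw [map_smul, sInner_smul_smul, Complex.conj_ofReal, sInner_self_eq_sNorm_sq hA,
      ← Complex.ofReal_mul, ← Complex.ofReal_mul, Complex.norm_real,
      Real.norm_of_nonneg (by positivity), show a * (a / t) * t ^ 2 = a ^ 2 * t by field_simp, ha2]
    ring

lemma sSup_offDiagValues (hA : A.IsPositive) {X : E →L[ℂ] E} (hX : ABounded A X) :
    sSup (offDiagValues A X) = 1 / 2 * opSNorm A X := by
  have hub : ∀ c ∈ offDiagValues A X, c ≤ 1 / 2 * opSNorm A X :=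
    fun _ hc => le_of_mem_offDiagValues hA hX hc
  have hnonneg : 0 ≤ sSup (offDiagValues A X) :=
    Real.sSup_nonneg fun _ ⟨_, _, _, hc⟩ => hc ▸ norm_nonneg _
  refine le_antisymm (Real.sSup_le hub (by linarith [opSNorm_nonneg A X])) ?_
  suffices opSNorm A X ≤ 2 * sSup (offDiagValues A X) by linarith
  refine Real.sSup_le ?_ (by linarith)
  rintro _ ⟨y, hy, rfl⟩
  rcases (sNorm_nonneg A (X y)).eq_or_lt with h0 | hpos
  · linarith
  · linarith [le_csSup ⟨_, hub⟩ (half_sNorm_apply_mem_offDiagValues hA hy hpos)]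

@[simp]
lemma blk_apply_fst (T X Y S : E →L[ℂ] E) (z : WithLp 2 (E × E)) :
    (blk T X Y S z).fst = T z.fst + X z.snd := rfl

@[simp]
lemma blk_apply_snd (T X Y S : E →L[ℂ] E) (z : WithLp 2 (E × E)) :
    (blk T X Y S z).snd = Y z.fst + S z.snd := rfl

lemma sInner_twoA (A : E →L[ℂ] E) (z w : WithLp 2 (E × E)) :
    sInner (twoA A) z w = sInner A z.fst w.fst + sInner A z.snd w.snd := by
  simp [sInner, twoA, WithLp.prod_inner_apply]

lemma sNorm_twoA_eq_one_iff (hA : A.IsPositive) (z : WithLp 2 (E × E)) :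
    sNorm (twoA A) z = 1 ↔ sNorm A z.fst ^ 2 + sNorm A z.snd ^ 2 = 1 := by
  rw [sNorm, sInner_twoA, Complex.add_re, Real.sqrt_eq_one, sNorm, sNorm,
    Real.sq_sqrt (sInner_self_re_nonneg hA _), Real.sq_sqrt (sInner_self_re_nonneg hA _)]

lemma numRad_twoA_blk_upper (hA : A.IsPositive) (X : E →L[ℂ] E) :
    numRad (twoA A) (blk 0 X 0 0) = sSup (offDiagValues A X) := by
  unfold numRad
  congr 1
  ext c
  constructor
  · rintro ⟨z, hz, rfl⟩
    exact ⟨z.fst, z.snd, (sNorm_twoA_eq_one_iff hA z).1 hz, by simp [sInner_twoA]⟩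
  · rintro ⟨u, v, huv, rfl⟩
    exact ⟨WithLp.toLp 2 (u, v), (sNorm_twoA_eq_one_iff hA _).2 huv,
      by simp [sInner_twoA]⟩

lemma numRad_twoA_blk_lower (hA : A.IsPositive) (X : E →L[ℂ] E) :
    numRad (twoA A) (blk 0 0 X 0) = sSup (offDiagValues A X) := by
  unfold numRad
  congr 1
  ext c
  constructor
  · rintro ⟨z, hz, rfl⟩
    exact ⟨z.snd, z.fst, by linarith [(sNorm_twoA_eq_one_iff hA z).1 hz],
      by simp [sInner_twoA]⟩
  · rintro ⟨u, v, huv, rfl⟩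
    exact ⟨WithLp.toLp 2 (v, u), (sNorm_twoA_eq_one_iff hA _).2 (by simpa [add_comm] using huv),
      by simp [sInner_twoA]⟩

end

theorem stmt5_general {H : Type*} [NormedAddCommGroup H] [InnerProductSpace ℂ H]
    (A : H →L[ℂ] H) (hA : A.IsPositive)
    (X : H →L[ℂ] H) (hX : ABounded A X) :
    numRad (twoA A) (blk 0 X 0 0) = (1 / 2) * opSNorm A X ∧
      numRad (twoA A) (blk 0 0 X 0) = (1 / 2) * opSNorm A X := by
  rw [numRad_twoA_blk_upper hA, numRad_twoA_blk_lower hA, sSup_offDiagValues hA hX]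
  exact ⟨rfl, rfl⟩

theorem stmt5 {H : Type*} [NormedAddCommGroup H] [InnerProductSpace ℂ H] [CompleteSpace H]
    (A : H →L[ℂ] H) (hA : A.IsPositive)
    (X : H →L[ℂ] H) (hX : ABounded A X)
    (hXadm : ∃ Xs : H →L[ℂ] H, A.comp Xs = (ContinuousLinearMap.adjoint X).comp A) :
    numRad (twoA A) (blk 0 X 0 0) = (1 / 2) * opSNorm A X ∧
      numRad (twoA A) (blk 0 0 X 0) = (1 / 2) * opSNorm A X :=
  stmt5_general A hA X hX
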